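/- Let (γ,d) be a graphical two-class PAM instance with classes V_1, V_2, and let c_11 = ((Σ_{j∈V_1} d_j) − γ)/2 and c_22 = ((Σ_{j∈V_2} d_j) − γ)/2 be the internal edge counts of any realization in G(γ,d). Let G ∈ G'(γ,d) have degree sequence d', γ' cut edges, and c'_11, c'_22 internal edges in V_1 and V_2 respectively. Then: (a) |d_v − d'_v| ≤ 2 for every vertex v; and (b) |c_11 − c'_11| ≤ 1, |c_22 − c'_22| ≤ 1, |γ − γ'| ≤ 1, and |c_11 − c'_11| + |c_22 − c'_22| + |γ − γ'| ∈ {0, 2}. -/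

import Mathlib

open SimpleGraph
open scoped symmDiff

/-- The degree of vertex `v` in graph `G`. -/
noncomputable def deg {n : ℕ} (G : SimpleGraph (Fin n)) (v : Fin n) : ℕ :=
  (G.neighborSet v).ncard

/-- The number of cut edges of `G`: edges with one endpoint in the class `V₁`
and one endpoint in the class `V₂ = V₁ᶜ`. -/
noncomputable def cutCount {n : ℕ} (V1 : Finset (Fin n)) (G : SimpleGraph (Fin n)) : ℕ :=
  {e ∈ G.edgeSet | ∃ u v : Fin n, e = s(u, v) ∧ u ∈ V1 ∧ v ∉ V1}.ncard

/-- The number of internal edges of `G` inside `V₁`. -/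
noncomputable def intCount1 {n : ℕ} (V1 : Finset (Fin n)) (G : SimpleGraph (Fin n)) : ℕ :=
  {e ∈ G.edgeSet | ∃ u v : Fin n, e = s(u, v) ∧ u ∈ V1 ∧ v ∈ V1}.ncard

/-- The number of internal edges of `G` inside `V₂ = V₁ᶜ`. -/
noncomputable def intCount2 {n : ℕ} (V1 : Finset (Fin n)) (G : SimpleGraph (Fin n)) : ℕ :=
  {e ∈ G.edgeSet | ∃ u v : Fin n, e = s(u, v) ∧ u ∉ V1 ∧ v ∉ V1}.ncard

/-- `G ∈ 𝒢(γ,d)`: vertex `i` has degree `d i` for every `i`, and `G` has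
exactly `γ` cut edges. -/
def memPAM {n : ℕ} (V1 : Finset (Fin n)) (γ : ℕ) (d : Fin n → ℕ)
    (G : SimpleGraph (Fin n)) : Prop :=
  (∀ v, deg G v = d v) ∧ cutCount V1 G = γ

/-- `G ∈ 𝒢'(γ,d)`: the degree sequence `d'` of `G` and its number `γ'` of cut
edges satisfy `Σ d'ᵢ = Σ dᵢ`, `Σ |dᵢ − d'ᵢ| ≤ 4`, and `|γ' − γ| ≤ 1`. -/
def memPAM' {n : ℕ} (V1 : Finset (Fin n)) (γ : ℕ) (d : Fin n → ℕ)
    (G : SimpleGraph (Fin n)) : Prop :=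
  (∑ v, deg G v = ∑ v, d v) ∧
  (∑ v, |(d v : ℤ) - (deg G v : ℤ)| ≤ 4) ∧
  |(cutCount V1 G : ℤ) - (γ : ℤ)| ≤ 1

/-- A hinge flip: replace an edge `{i,j}` of `G` by a non-edge `{j,k}`. -/
def hingeFlip {n : ℕ} (G H : SimpleGraph (Fin n)) : Prop :=
  ∃ i j k : Fin n, G.Adj i j ∧ j ≠ k ∧ ¬ G.Adj j k ∧
    H = (G.deleteEdges {s(i, j)}) ⊔ fromEdgeSet {s(j, k)}

/-! Counting the darts whose tail lies in a class `s` gives `∑_{v ∈ s} d'_v = 2 c'_s + γ'`.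
Subtracting this from `2 c_s + γ = ∑_{v ∈ s} d_v` shows that the deviations
`a = c₁₁ - c'₁₁`, `b = c₂₂ - c'₂₂`, `g = γ - γ'` satisfy `2a + g = S` and `2b + g = -S`, where
`S = ∑_{v ∈ V₁} (d_v - d'_v)`. The perturbations `d - d'` sum to zero, so each of their partial
sums is at most half their `ℓ¹`-norm `≤ 4` in absolute value: this gives `|d_v - d'_v| ≤ 2` and
`|S| ≤ 2`. The rest is integer arithmetic with `|g| ≤ 1`; since `a + b + g = 0`, the sum
`|a| + |b| + |g|` is even. -/

open Finset

namespace SimpleGraph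
variable {V : Type*} [Fintype V] [DecidableEq V] (G : SimpleGraph V) [DecidableRel G.Adj]
  (s : Finset V)

theorem card_dart_fst_mem : #{d : G.Dart | d.fst ∈ s} = ∑ v ∈ s, G.degree v := by
  rw [card_eq_sum_card_fiberwise (s := {d : G.Dart | d.fst ∈ s}) (t := s)
    fun d hd => (mem_filter.mp hd).2]
  refine sum_congr rfl fun v hv => ?_
  rw [← dart_fst_fiber_card_eq_degree, filter_filter]
  congr 1
  ext d
  simp only [mem_filter, mem_univ, true_and]
  exact ⟨And.right, fun h => ⟨h ▸ hv, h⟩⟩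

theorem card_dart_fst_mem_snd_mem :
    #{d : G.Dart | d.fst ∈ s ∧ d.snd ∈ s} =
      2 * #{e ∈ G.edgeFinset | ∃ u v, e = s(u, v) ∧ u ∈ s ∧ v ∈ s} := by
  rw [card_eq_sum_card_fiberwise (f := Dart.edge)
      (t := {e ∈ G.edgeFinset | ∃ u v, e = s(u, v) ∧ u ∈ s ∧ v ∈ s}), mul_comm,
    ← smul_eq_mul, ← sum_const]
  · refine sum_congr rfl fun e he => ?_
    obtain ⟨he, u, v, rfl, hu, hv⟩ := mem_filter.mp he
    rw [← G.dart_edge_fiber_card _ (mem_edgeFinset.mp he), filter_filter]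
    congr 1
    ext d
    simp only [mem_filter, mem_univ, true_and, and_iff_right_iff_imp, dart_edge_eq_mk'_iff']
    rintro (⟨rfl, rfl⟩ | ⟨rfl, rfl⟩) <;> exact ⟨‹_›, ‹_›⟩
  · intro d hd
    rw [mem_coe, mem_filter] at hd ⊢
    exact ⟨mem_edgeFinset.mpr d.edge_mem, d.fst, d.snd, rfl, hd.2⟩

theorem card_dart_fst_mem_snd_notMem :
    #{d : G.Dart | d.fst ∈ s ∧ d.snd ∉ s} =
      #{e ∈ G.edgeFinset | ∃ u v, e = s(u, v) ∧ u ∈ s ∧ v ∉ s} := by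
  refine card_nbij Dart.edge (fun d hd => ?_) (fun d₁ hd₁ d₂ hd₂ h => ?_) (fun e he => ?_)
  · rw [mem_coe, mem_filter] at hd
    rw [coe_filter, Set.mem_ofPred_eq]
    exact ⟨mem_edgeFinset.mpr d.edge_mem, d.fst, d.snd, rfl, hd.2⟩
  · rw [mem_coe, mem_filter] at hd₁ hd₂
    refine ((dart_edge_eq_iff d₁ d₂).mp h).resolve_right fun h' => ?_
    subst h'
    exact hd₂.2.2 hd₁.2.1
  · simp only [coe_filter, Set.mem_ofPred_eq, mem_edgeFinset] at he
    obtain ⟨he, u, v, rfl, hu, hv⟩ := he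
    exact ⟨⟨(u, v), he⟩, by simp [hu, hv], rfl⟩

theorem sum_degree_eq_two_mul_card_internal_add_card_cut :
    ∑ v ∈ s, G.degree v =
      2 * #{e ∈ G.edgeFinset | ∃ u v, e = s(u, v) ∧ u ∈ s ∧ v ∈ s} +
        #{e ∈ G.edgeFinset | ∃ u v, e = s(u, v) ∧ u ∈ s ∧ v ∉ s} := by
  rw [← card_dart_fst_mem, ← card_dart_fst_mem_snd_mem, ← card_dart_fst_mem_snd_notMem,
    ← card_union_of_disjoint (disjoint_filter.mpr fun _ _ h h' => h'.2 h.2), ← filter_or]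
  congr 1
  ext d
  simp only [mem_filter, mem_univ, true_and]
  tauto

end SimpleGraph

theorem two_nsmul_abs_sum_le_sum_abs_of_sum_eq_zero {α ι : Type*} [AddCommGroup α]
    [LinearOrder α] [IsOrderedAddMonoid α] [Fintype ι] {f : ι → α} (hf : ∑ i, f i = 0)
    (s : Finset ι) : 2 • |∑ i ∈ s, f i| ≤ ∑ i, |f i| := by
  classical
  have hcompl : |∑ i ∈ sᶜ, f i| = |∑ i ∈ s, f i| := by
    rw [← abs_neg, ← zero_sub, ← hf, ← sum_add_sum_compl s f, add_sub_cancel_right]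
  calc 2 • |∑ i ∈ s, f i| = |∑ i ∈ s, f i| + |∑ i ∈ sᶜ, f i| := by rw [two_nsmul, hcompl]
    _ ≤ ∑ i ∈ s, |f i| + ∑ i ∈ sᶜ, |f i| :=
      add_le_add (abs_sum_le_sum_abs f s) (abs_sum_le_sum_abs f sᶜ)
    _ = ∑ i, |f i| := sum_add_sum_compl s _

theorem Int.abs_deviations_of_two_mul_add_eq {a b g S : ℤ} (ha : 2 * a + g = S)
    (hb : 2 * b + g = -S) (hS : |S| ≤ 2) (hg : |g| ≤ 1) :
    |a| ≤ 1 ∧ |b| ≤ 1 ∧ |g| ≤ 1 ∧ (|a| + |b| + |g| = 0 ∨ |a| + |b| + |g| = 2) := by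
  rw [abs_le] at hS hg
  rcases abs_cases a with ⟨ha', _⟩ | ⟨ha', _⟩ <;>
    rcases abs_cases b with ⟨hb', _⟩ | ⟨hb', _⟩ <;>
    rcases abs_cases g with ⟨hg', _⟩ | ⟨hg', _⟩ <;> rw [ha', hb', hg'] <;> omega

lemma deg_eq_degree {n : ℕ} (G : SimpleGraph (Fin n)) [DecidableRel G.Adj] (v : Fin n) :
    deg G v = G.degree v := by
  rw [deg, Set.ncard_eq_toFinset_card', Set.toFinset_card, card_neighborSet_eq_degree]

lemma ncard_sep_edgeSet {V : Type*} [Fintype V] (G : SimpleGraph V) [DecidableRel G.Adj]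
    (P : Sym2 V → Prop) [DecidablePred P] :
    {e ∈ G.edgeSet | P e}.ncard = #{e ∈ G.edgeFinset | P e} := by
  rw [← Set.ncard_coe_finset, coe_filter]
  simp only [mem_edgeFinset]

lemma sum_deg_eq_two_mul_intCount1_add_cutCount {n : ℕ} (s : Finset (Fin n))
    (G : SimpleGraph (Fin n)) :
    ∑ v ∈ s, deg G v = 2 * intCount1 s G + cutCount s G := by
  classical
  simp only [deg_eq_degree, intCount1, cutCount, ncard_sep_edgeSet]
  convert G.sum_degree_eq_two_mul_card_internal_add_card_cut s

lemma intCount2_eq_intCount1_compl {n : ℕ} (V1 : Finset (Fin n)) (G : SimpleGraph (Fin n)) :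
    intCount2 V1 G = intCount1 V1ᶜ G := by
  simp only [intCount2, intCount1, mem_compl]

lemma cutCount_compl {n : ℕ} (V1 : Finset (Fin n)) (G : SimpleGraph (Fin n)) :
    cutCount V1ᶜ G = cutCount V1 G := by
  simp only [cutCount, mem_compl, not_not]
  congr! 4 with e
  constructor <;> rintro ⟨u, v, rfl, hu, hv⟩ <;> exact ⟨v, u, Sym2.eq_swap, hv, hu⟩

lemma two_mul_sub_intCount1_add_sub_cutCount {n : ℕ} (s : Finset (Fin n))
    (G : SimpleGraph (Fin n)) (d : Fin n → ℕ) {c γ : ℕ} (h : 2 * c + γ = ∑ j ∈ s, d j) :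
    2 * ((c : ℤ) - intCount1 s G) + ((γ : ℤ) - cutCount s G) =
      ∑ v ∈ s, ((d v : ℤ) - deg G v) := by
  have hdeg := sum_deg_eq_two_mul_intCount1_add_cutCount s G
  rw [sum_sub_distrib]
  zify at h hdeg
  rw [← h, hdeg]
  ring

theorem stmt12_general {n : ℕ} (V1 : Finset (Fin n)) (γ : ℕ) (d : Fin n → ℕ)
    (c11 c22 : ℕ)
    (hc11 : 2 * c11 + γ = ∑ j ∈ V1, d j)
    (hc22 : 2 * c22 + γ = ∑ j ∈ V1ᶜ, d j)
    (G : SimpleGraph (Fin n)) (hG : memPAM' V1 γ d G) :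
    (∀ v, |(d v : ℤ) - (deg G v : ℤ)| ≤ 2) ∧
    |(c11 : ℤ) - (intCount1 V1 G : ℤ)| ≤ 1 ∧
    |(c22 : ℤ) - (intCount2 V1 G : ℤ)| ≤ 1 ∧
    |(γ : ℤ) - (cutCount V1 G : ℤ)| ≤ 1 ∧
    (|(c11 : ℤ) - (intCount1 V1 G : ℤ)| + |(c22 : ℤ) - (intCount2 V1 G : ℤ)| +
        |(γ : ℤ) - (cutCount V1 G : ℤ)| = 0 ∨
     |(c11 : ℤ) - (intCount1 V1 G : ℤ)| + |(c22 : ℤ) - (intCount2 V1 G : ℤ)| +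
        |(γ : ℤ) - (cutCount V1 G : ℤ)| = 2) := by
  obtain ⟨hsum, habs, hcut⟩ := hG
  set x : Fin n → ℤ := fun v => (d v : ℤ) - deg G v
  have hx : ∑ v, x v = 0 := by
    rw [sum_sub_distrib, sub_eq_zero]
    exact_mod_cast hsum.symm
  have hV1 := two_mul_sub_intCount1_add_sub_cutCount V1 G d hc11
  have hV2 := two_mul_sub_intCount1_add_sub_cutCount V1ᶜ G d hc22
  rw [← intCount2_eq_intCount1_compl, cutCount_compl] at hV2
  have hcompl : ∑ v ∈ V1ᶜ, x v = -∑ v ∈ V1, x v := by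
    rw [eq_neg_iff_add_eq_zero, add_comm, sum_add_sum_compl, hx]
  have hS := two_nsmul_abs_sum_le_sum_abs_of_sum_eq_zero hx V1
  refine ⟨fun v => ?_, Int.abs_deviations_of_two_mul_add_eq hV1 (hV2.trans hcompl)
    (by rw [two_nsmul] at hS; linarith) (by rwa [abs_sub_comm])⟩
  have hv := two_nsmul_abs_sum_le_sum_abs_of_sum_eq_zero hx {v}
  rw [sum_singleton, two_nsmul] at hv
  linarith

/-- Proposition D.1. For any `G ∈ 𝒢'(γ,d)` in a graphical
two-class PAM instance: (a) every vertex has degree perturbation at most `2`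
in absolute value; (b) the internal edge counts of each class and the cut-edge
count each deviate from their target values (`c₁₁`, `c₂₂`, `γ`) by at most `1`,
and the sum of the three absolute deviations is `0` or `2`. -/
theorem stmt12 {n : ℕ} (V1 : Finset (Fin n)) (γ : ℕ) (d : Fin n → ℕ)
    (c11 c22 : ℕ)
    (hV1 : V1.Nonempty) (hV2 : V1ᶜ.Nonempty)
    (hdpos : ∀ v, 1 ≤ d v) (hγpos : 1 ≤ γ)
    (hgraphical : ∃ H : SimpleGraph (Fin n), memPAM V1 γ d H)
    (hc11 : 2 * c11 + γ = ∑ j ∈ V1, d j)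
    (hc22 : 2 * c22 + γ = ∑ j ∈ V1ᶜ, d j)
    (G : SimpleGraph (Fin n)) (hG : memPAM' V1 γ d G) :
    (∀ v, |(d v : ℤ) - (deg G v : ℤ)| ≤ 2) ∧
    |(c11 : ℤ) - (intCount1 V1 G : ℤ)| ≤ 1 ∧
    |(c22 : ℤ) - (intCount2 V1 G : ℤ)| ≤ 1 ∧
    |(γ : ℤ) - (cutCount V1 G : ℤ)| ≤ 1 ∧
    (|(c11 : ℤ) - (intCount1 V1 G : ℤ)| + |(c22 : ℤ) - (intCount2 V1 G : ℤ)| +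
        |(γ : ℤ) - (cutCount V1 G : ℤ)| = 0 ∨
     |(c11 : ℤ) - (intCount1 V1 G : ℤ)| + |(c22 : ℤ) - (intCount2 V1 G : ℤ)| +
        |(γ : ℤ) - (cutCount V1 G : ℤ)| = 2) :=
  stmt12_general V1 γ d c11 c22 hc11 hc22 G hG
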